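/- Suppose F = (1/n) Σ_{i=1}^n f_i is average-L-smooth, and let F* be a lower bound of F. Run SARAH with inner loop size m = n and learning rate η = 2/(3L√(n+1)), and let ε > 0. If S = ⌈3L(F(w̃_0) − F*)/(√(n+1) ε)⌉, then (1/((n+1)S)) Σ_{s=1}^{S} Σ_{t=0}^{n} E[‖∇F(w_t^{(s)})‖²] ≤ ε, and the total number of stochastic gradient evaluations satisfies S(n + 2n) ≤ 9√n · L(F(w̃_0) − F*)/ε + 3n. -/

import Mathlib

noncomputable section

abbrev Vec (d : ℕ) : Type := EuclideanSpace ℝ (Fin d)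

/-- One inner loop of SARAH: `(innerSeq d n f F η x0 ι t) = (w_t, v_t)`, where the step from
`t` to `t+1` uses the sampled index `ι t` (so `ι t` plays the role of `i_{t+1}`). -/
noncomputable def innerSeq (d n : ℕ) (f : Fin n → Vec d → ℝ) (F : Vec d → ℝ) (η : ℝ)
    (x0 : Vec d) (ι : ℕ → Fin n) : ℕ → Vec d × Vec d
  | 0 => (x0, gradient F x0)
  | t + 1 =>
    let p := innerSeq d n f F η x0 ι t
    let w := p.1 - η • p.2
    (w, gradient (f (ι t)) w - gradient (f (ι t)) p.1 + p.2)

/-- Outer iterates of SARAH: `outerSeq d n m f F η w0 ω s = w̃_s`, where the `s`-th outer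
loop uses the index sequence `ω s` and `w̃_s = w_{m+1}^{(s)}`. -/
noncomputable def outerSeq (d n m : ℕ) (f : Fin n → Vec d → ℝ) (F : Vec d → ℝ) (η : ℝ)
    (w0 : Vec d) (ω : ℕ → ℕ → Fin n) : ℕ → Vec d
  | 0 => w0
  | s + 1 => (innerSeq d n f F η (outerSeq d n m f F η w0 ω s) (ω s) (m + 1)).1

/-- Expectation over the uniformly random index sequences of SARAH with (at least) `S` outer
loops of `m` inner steps each: the average of `X` over all `ω : Fin S → Fin m → Fin n`,
extended by a dummy index outside this range. -/
noncomputable def sarahE (n m S : ℕ) (hn : 0 < n) (X : (ℕ → ℕ → Fin n) → ℝ) : ℝ :=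
  (∑ ω : Fin S → Fin m → Fin n,
      X fun s t => if h : s < S ∧ t < m then ω ⟨s, h.1⟩ ⟨t, h.2⟩ else ⟨0, hn⟩) /
    (Fintype.card (Fin S → Fin m → Fin n) : ℝ)


/-!
Each SARAH step is a gradient step with a biased estimate `v_t`, so the descent lemma for the
`L`-smooth `F` gives `F(w_{t+1}) ≤ F(w_t) - η/2 ‖∇F(w_t)‖² + η/2 ‖∇F(w_t) - v_t‖²
- η/2 (1 - Lη) ‖v_t‖²`. Since the index drawn at step `t` is independent of the past,
`∇F(w_{t+1}) - v_{t+1}` is a mean-zero perturbation of `∇F(w_t) - v_t`, and average smoothness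
bounds the growth of its second moment by `L²η² E‖v_t‖²`; it vanishes at `t = 0`. Over an inner
loop of length `m` the estimator error is thus paid for by the `‖v_t‖²` terms once
`L²η²m + Lη ≤ 1`, which `η = 2/(3L√(n+1))` ensures for `m = n`, and
`Σ_t E‖∇F(w_t)‖² ≤ (2/η) E[F(w̃_{s-1}) - F(w̃_s)]`. Telescoping over the outer loops bounds the
total by `3L√(n+1) (F(w̃_0) - F*)`, and the choice of `S` turns this into `ε`.
-/

open Finset RealInnerProductSpace
open scoped BigOperators Gradient

theorem sum_norm_add_sub_sq_le {E ι : Type*} [NormedAddCommGroup E] [InnerProductSpace ℝ E]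
    [Fintype ι] (D a : E) (x : ι → E) (ha : (Fintype.card ι : ℝ) • a = ∑ i, x i) :
    ∑ i, ‖D + (a - x i)‖ ^ 2 ≤ Fintype.card ι * ‖D‖ ^ 2 + ∑ i, ‖x i‖ ^ 2 := by
  have hcross : ∑ i, ⟪D, a - x i⟫ = 0 := by
    rw [← inner_sum, sum_sub_distrib, sum_const, card_univ, ← Nat.cast_smul_eq_nsmul ℝ, ha,
      sub_self, inner_zero_right]
  have hvar : ∑ i, ‖a - x i‖ ^ 2 = ∑ i, ‖x i‖ ^ 2 - Fintype.card ι * ‖a‖ ^ 2 := by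
    simp only [norm_sub_sq_real, sum_add_distrib, sum_sub_distrib, ← mul_sum, ← inner_sum, ← ha,
      real_inner_smul_right, real_inner_self_eq_norm_sq, sum_const, card_univ, nsmul_eq_mul]
    ring
  calc ∑ i, ‖D + (a - x i)‖ ^ 2
      = Fintype.card ι * ‖D‖ ^ 2 + 2 * ∑ i, ⟪D, a - x i⟫ + ∑ i, ‖a - x i‖ ^ 2 := by
        simp only [norm_add_sq_real, sum_add_distrib, ← mul_sum, sum_const, card_univ,
          nsmul_eq_mul]
    _ ≤ Fintype.card ι * ‖D‖ ^ 2 + ∑ i, ‖x i‖ ^ 2 := by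
        rw [hcross, hvar]; nlinarith [norm_nonneg a, (Fintype.card ι).cast_nonneg (α := ℝ)]

section Smooth

variable {E : Type*} [NormedAddCommGroup E] [InnerProductSpace ℝ E] [CompleteSpace E]
  {n : ℕ} {f : Fin n → E → ℝ} {F : E → ℝ} {L : ℝ}

theorem apply_add_le_of_lipschitz_gradient (hF : Differentiable ℝ F)
    (hlip : ∀ x y, ‖∇ F x - ∇ F y‖ ≤ L * ‖x - y‖) (x u : E) :
    F (x + u) ≤ F x + ⟪∇ F x, u⟫ + L / 2 * ‖u‖ ^ 2 := by
  -- `φ' τ = ⟪∇F(x + τu) - ∇F x, u⟫ - Lτ‖u‖² ≤ 0` for `τ ≥ 0`, so `φ 1 ≤ φ 0`.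
  set φ : ℝ → ℝ := fun τ => F (x + τ • u) - τ * ⟪∇ F x, u⟫ - L / 2 * τ ^ 2 * ‖u‖ ^ 2
  have hφ : ∀ τ : ℝ, HasDerivAt φ (⟪∇ F (x + τ • u), u⟫ - ⟪∇ F x, u⟫ - L * τ * ‖u‖ ^ 2) τ := by
    intro τ
    have hline : HasDerivAt (fun τ : ℝ => x + τ • u) u τ := by
      simpa using ((hasDerivAt_id τ).smul_const u).const_add x
    have hFline : HasDerivAt (fun τ : ℝ => F (x + τ • u)) ⟪∇ F (x + τ • u), u⟫ τ := by
      rw [← InnerProductSpace.toDual_apply_apply, toDual_gradient]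
      exact (hF _).hasFDerivAt.comp_hasDerivAt τ hline
    have hquad : HasDerivAt (fun τ : ℝ => L / 2 * τ ^ 2 * ‖u‖ ^ 2) (L * τ * ‖u‖ ^ 2) τ := by
      refine (((hasDerivAt_pow 2 τ).const_mul (L / 2)).mul_const (‖u‖ ^ 2)).congr_deriv ?_
      push_cast; ring
    exact (hFline.sub (hasDerivAt_mul_const _)).sub hquad
  have hanti : AntitoneOn φ (Set.Icc 0 1) := by
    refine antitoneOn_of_deriv_nonpos (convex_Icc 0 1)
      (fun τ _ => (hφ τ).continuousAt.continuousWithinAt)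
      (fun τ _ => (hφ τ).differentiableAt.differentiableWithinAt) fun τ hτ => ?_
    rw [interior_Icc] at hτ
    have hinner : ⟪∇ F (x + τ • u) - ∇ F x, u⟫ ≤ L * τ * ‖u‖ ^ 2 :=
      calc ⟪∇ F (x + τ • u) - ∇ F x, u⟫ ≤ ‖∇ F (x + τ • u) - ∇ F x‖ * ‖u‖ :=
            real_inner_le_norm _ _
        _ ≤ L * ‖(x + τ • u) - x‖ * ‖u‖ := by gcongr; exact hlip _ _
        _ = L * τ * ‖u‖ ^ 2 := by
            rw [add_sub_cancel_left, norm_smul, Real.norm_of_nonneg hτ.1.le]; ring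
    rw [(hφ τ).deriv, inner_sub_left] at *
    linarith
  have h01 := hanti (Set.left_mem_Icc.mpr zero_le_one) (Set.right_mem_Icc.mpr zero_le_one)
    zero_le_one
  simp only [φ, one_smul, zero_smul, add_zero] at h01
  linarith

theorem apply_sub_smul_le_of_lipschitz_gradient (hF : Differentiable ℝ F)
    (hlip : ∀ x y, ‖∇ F x - ∇ F y‖ ≤ L * ‖x - y‖) {η : ℝ} (hη : 0 ≤ η) (w v : E) :
    F (w - η • v) + η / 2 * ‖∇ F w‖ ^ 2 + η / 2 * (1 - L * η) * ‖v‖ ^ 2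
      ≤ F w + η / 2 * ‖∇ F w - v‖ ^ 2 := by
  have hdesc := apply_add_le_of_lipschitz_gradient hF hlip w (-(η • v))
  rw [← sub_eq_add_neg, inner_neg_right, real_inner_smul_right, norm_neg, norm_smul,
    Real.norm_of_nonneg hη] at hdesc
  nlinarith [norm_sub_sq_real (∇ F w) v]

theorem hasGradientAt_of_eq_sum_div (hF : ∀ w, F w = (∑ i, f i w) / n)
    (hf : ∀ i, Differentiable ℝ (f i)) (x : E) :
    HasGradientAt F ((n : ℝ)⁻¹ • ∑ i, ∇ (f i) x) x := by
  have hF' : F = (n : ℝ)⁻¹ • fun w => ∑ i, f i w := by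
    funext w; rw [hF w, div_eq_inv_mul]; rfl
  have hderiv := (HasFDerivAt.fun_sum (u := univ) fun i _ => (hf i x).hasFDerivAt).const_smul
    (n : ℝ)⁻¹
  rw [hF']
  convert hasFDerivAt_iff_hasGradientAt.mp hderiv using 1
  rw [map_smul, map_sum]
  rfl

structure AverageSmooth (f : Fin n → E → ℝ) (F : E → ℝ) (L : ℝ) : Prop where
  eq_sum_div : ∀ w, F w = (∑ i, f i w) / n
  differentiable_summand : ∀ i, Differentiable ℝ (f i)
  avg_sq_norm_gradient_sub_le : ∀ w w' : E,
    (∑ i, ‖∇ (f i) w - ∇ (f i) w'‖ ^ 2) / n ≤ L ^ 2 * ‖w - w'‖ ^ 2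

namespace AverageSmooth

variable (hfF : AverageSmooth f F L)
include hfF

theorem gradient_eq (x : E) : ∇ F x = (n : ℝ)⁻¹ • ∑ i, ∇ (f i) x :=
  (hasGradientAt_of_eq_sum_div hfF.eq_sum_div hfF.differentiable_summand x).gradient

theorem differentiable : Differentiable ℝ F := fun x =>
  (hasGradientAt_of_eq_sum_div hfF.eq_sum_div hfF.differentiable_summand x).differentiableAt

theorem norm_gradient_sub_le (hL : 0 ≤ L) (x y : E) : ‖∇ F x - ∇ F y‖ ≤ L * ‖x - y‖ := by
  rcases Nat.eq_zero_or_pos n with rfl | hn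
  · simp [hfF.gradient_eq, mul_nonneg hL (norm_nonneg _)]
  set g : Fin n → E := fun i => ∇ (f i) x - ∇ (f i) y
  have hdiff : ∇ F x - ∇ F y = (n : ℝ)⁻¹ • ∑ i, g i := by
    simp only [hfF.gradient_eq, g, ← smul_sub, sum_sub_distrib]
  have hsum : ‖∑ i, g i‖ ^ 2 ≤ n * ∑ i, ‖g i‖ ^ 2 :=
    calc ‖∑ i, g i‖ ^ 2 ≤ (∑ i, ‖g i‖) ^ 2 := by gcongr; exact norm_sum_le _ _
      _ ≤ n * ∑ i, ‖g i‖ ^ 2 := by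
        simpa using sq_sum_le_card_mul_sum_sq (s := univ) (f := fun i => ‖g i‖)
  have hsq : ‖∇ F x - ∇ F y‖ ^ 2 ≤ (L * ‖x - y‖) ^ 2 := by
    have hn' : (0 : ℝ) < n := by exact_mod_cast hn
    calc ‖∇ F x - ∇ F y‖ ^ 2 = ‖∑ i, g i‖ ^ 2 / n ^ 2 := by
          rw [hdiff, norm_smul, mul_pow, norm_inv, Real.norm_natCast]; field_simp
      _ ≤ (∑ i, ‖g i‖ ^ 2) / n := by
          rw [div_le_div_iff₀ (by positivity) hn']; nlinarith
      _ ≤ (L * ‖x - y‖) ^ 2 := by rw [mul_pow]; exact hfF.avg_sq_norm_gradient_sub_le x y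
  exact (pow_le_pow_iff_left₀ (norm_nonneg _) (by positivity) two_ne_zero).mp hsq

theorem expect_norm_gradient_sub_sarah_sq_le (hn : 0 < n) (w w' v : E) :
    𝔼 i, ‖∇ F w' - (∇ (f i) w' - ∇ (f i) w + v)‖ ^ 2 ≤ ‖∇ F w - v‖ ^ 2 + L ^ 2 * ‖w' - w‖ ^ 2 := by
  have hn' : (n : ℝ) ≠ 0 := by exact_mod_cast hn.ne'
  have hmean : (Fintype.card (Fin n) : ℝ) • (∇ F w' - ∇ F w)
      = ∑ i, (∇ (f i) w' - ∇ (f i) w) := by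
    simp only [hfF.gradient_eq, Fintype.card_fin, ← smul_sub, smul_smul, mul_inv_cancel₀ hn',
      one_smul, sum_sub_distrib]
  have hsum := sum_norm_add_sub_sq_le (∇ F w - v) _ _ hmean
  rw [Fintype.card_fin] at hsum
  rw [Fintype.expect_eq_sum_div_card, Fintype.card_fin, div_le_iff₀ (by positivity)]
  calc ∑ i, ‖∇ F w' - (∇ (f i) w' - ∇ (f i) w + v)‖ ^ 2
      = ∑ i, ‖∇ F w - v + (∇ F w' - ∇ F w - (∇ (f i) w' - ∇ (f i) w))‖ ^ 2 := by
        congr! 3; abel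
    _ ≤ n * ‖∇ F w - v‖ ^ 2 + ∑ i, ‖∇ (f i) w' - ∇ (f i) w‖ ^ 2 := hsum
    _ ≤ (‖∇ F w - v‖ ^ 2 + L ^ 2 * ‖w' - w‖ ^ 2) * n := by
        have havg := hfF.avg_sq_norm_gradient_sub_le w' w
        rw [div_le_iff₀ (by positivity)] at havg
        linarith

end AverageSmooth

end Smooth

theorem Fintype.expect_apply_eval_eq_expect_expect {α β M : Type*} [Fintype α] [DecidableEq α]
    [Fintype β] [Nonempty β] [AddCommMonoid M] [Module ℚ≥0 M] (k : α)
    (h : (α → β) → β → M) (hk : ∀ p b, h (Function.update p k b) = h p) :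
    𝔼 p, h p (p k) = 𝔼 p, 𝔼 b, h p b := by
  -- `(p, b) ↦ (update p k b, p k)` is an involution of `(α → β) × β`.
  let σ : (α → β) × β ≃ (α → β) × β :=
    Function.Involutive.toPerm (fun x => (Function.update x.1 k x.2, x.1 k)) fun x => by simp
  calc 𝔼 p, h p (p k) = 𝔼 x : (α → β) × β, h x.1 (x.1 k) := by
        rw [← univ_product_univ, expect_product' univ univ fun p (_ : β) => h p (p k)]
        simp only [Fintype.expect_const]
    _ = 𝔼 x : (α → β) × β, h x.1 x.2 :=
        Fintype.expect_equiv σ _ _ fun x => (congrFun (hk x.1 x.2) _).symm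
    _ = 𝔼 p, 𝔼 b, h p b := by rw [← univ_product_univ, expect_product']

theorem sum_range_le_mul_sum_of_le_add {D B : ℕ → ℝ} {c : ℝ} {m : ℕ} (hc : 0 ≤ c)
    (hB : ∀ t, 0 ≤ B t) (h0 : D 0 = 0) (hD : ∀ t < m, D (t + 1) ≤ D t + c * B t) :
    ∑ t ∈ range (m + 1), D t ≤ m * c * ∑ t ∈ range (m + 1), B t := by
  have hpartial : ∀ t ≤ m, D t ≤ c * ∑ j ∈ range t, B j := by
    intro t ht
    induction t with
    | zero => simp [h0]
    | succ t ih =>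
      rw [sum_range_succ, mul_add]
      linarith [hD t ht, ih (Nat.le_of_succ_le ht)]
  have hmono : ∀ t ∈ range m, D (t + 1) ≤ c * ∑ j ∈ range (m + 1), B j := fun t ht =>
    (hpartial _ (mem_range.mp ht)).trans <| mul_le_mul_of_nonneg_left
      (sum_le_sum_of_subset_of_nonneg (range_subset_range.mpr (by have := mem_range.mp ht; omega))
        fun j _ _ => hB j) hc
  calc ∑ t ∈ range (m + 1), D t = ∑ t ∈ range m, D (t + 1) := by simp [sum_range_succ', h0]
    _ ≤ ∑ _t ∈ range m, c * ∑ j ∈ range (m + 1), B j := sum_le_sum hmono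
    _ = m * c * ∑ t ∈ range (m + 1), B t := by simp [mul_assoc]

def extendFin {β : Type*} {m : ℕ} (x₀ : β) (b : Fin m → β) : ℕ → β :=
  fun t => if h : t < m then b ⟨t, h⟩ else x₀

theorem extendFin_of_lt {β : Type*} {m : ℕ} (x₀ : β) (b : Fin m → β) {t : ℕ} (ht : t < m) :
    extendFin x₀ b t = b ⟨t, ht⟩ := dif_pos ht

theorem extendFin_update_of_ne {β : Type*} {m : ℕ} (x₀ : β) (b : Fin m → β) (k : Fin m) (c : β)
    {t : ℕ} (ht : t ≠ k) : extendFin x₀ (Function.update b k c) t = extendFin x₀ b t := by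
  unfold extendFin
  split_ifs with h
  · exact Function.update_of_ne (fun hk => ht (congrArg Fin.val hk)) _ _
  · rfl

def sarahIndices {n m S : ℕ} (i₀ : Fin n) (ω : Fin S → Fin m → Fin n) : ℕ → ℕ → Fin n :=
  extendFin (fun _ => i₀) fun s => extendFin i₀ (ω s)

theorem sarahIndices_update_of_ne {n m S : ℕ} (i₀ : Fin n) (ω : Fin S → Fin m → Fin n)
    (k : Fin S) (b : Fin m → Fin n) {s : ℕ} (hs : s ≠ k) :
    sarahIndices i₀ (Function.update ω k b) s = sarahIndices i₀ ω s := by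
  unfold sarahIndices extendFin
  split_ifs with h
  · have hne : (⟨s, h⟩ : Fin S) ≠ k := fun hk => hs (congrArg Fin.val hk)
    simp only [Function.update_of_ne hne]
  · rfl

theorem sarahE_eq_expect {n m S : ℕ} (hn : 0 < n) (X : (ℕ → ℕ → Fin n) → ℝ) :
    sarahE n m S hn X = 𝔼 ω : Fin S → Fin m → Fin n, X (sarahIndices ⟨0, hn⟩ ω) := by
  rw [sarahE, Fintype.expect_eq_sum_div_card]
  refine congrArg (· / _) (sum_congr rfl fun ω _ => congrArg X ?_)
  funext s t
  unfold sarahIndices extendFin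
  split_ifs <;> simp_all

section Sarah

variable {d n m S : ℕ} {f : Fin n → Vec d → ℝ} {F : Vec d → ℝ} {η L : ℝ}

theorem innerSeq_congr {x₀ : Vec d} {ι ι' : ℕ → Fin n} {t : ℕ} (h : ∀ j < t, ι j = ι' j) :
    innerSeq d n f F η x₀ ι t = innerSeq d n f F η x₀ ι' t := by
  induction t with
  | zero => rfl
  | succ t ih =>
    simp only [innerSeq, ih fun j hj => h j (Nat.lt_succ_of_lt hj), h t t.lt_succ_self]

theorem outerSeq_congr {w₀ : Vec d} {ω ω' : ℕ → ℕ → Fin n} {s : ℕ} (h : ∀ r < s, ω r = ω' r) :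
    outerSeq d n m f F η w₀ ω s = outerSeq d n m f F η w₀ ω' s := by
  induction s with
  | zero => rfl
  | succ s ih =>
    simp only [outerSeq, ih fun r hr => h r (Nat.lt_succ_of_lt hr), h s s.lt_succ_self]

theorem innerSeq_descent (hF : Differentiable ℝ F)
    (hlip : ∀ x y, ‖∇ F x - ∇ F y‖ ≤ L * ‖x - y‖) (hη : 0 ≤ η) (x₀ : Vec d) (ι : ℕ → Fin n)
    (T : ℕ) :
    F (innerSeq d n f F η x₀ ι T).1 + ∑ t ∈ range T,
        (η / 2 * ‖∇ F (innerSeq d n f F η x₀ ι t).1‖ ^ 2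
          + η / 2 * (1 - L * η) * ‖(innerSeq d n f F η x₀ ι t).2‖ ^ 2
          - η / 2 * ‖∇ F (innerSeq d n f F η x₀ ι t).1 - (innerSeq d n f F η x₀ ι t).2‖ ^ 2)
      ≤ F x₀ := by
  induction T with
  | zero => simp [innerSeq]
  | succ T ih =>
    have hstep := apply_sub_smul_le_of_lipschitz_gradient hF hlip hη
      (innerSeq d n f F η x₀ ι T).1 (innerSeq d n f F η x₀ ι T).2
    rw [sum_range_succ]
    exact le_trans (by simp only [innerSeq]; linarith) ih

theorem expect_norm_gradient_sub_innerSeq_succ_le (hfF : AverageSmooth f F L) (i₀ : Fin n)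
    (x₀ : Vec d) {t : ℕ} (ht : t < m) :
    𝔼 b : Fin m → Fin n, ‖∇ F (innerSeq d n f F η x₀ (extendFin i₀ b) (t + 1)).1
        - (innerSeq d n f F η x₀ (extendFin i₀ b) (t + 1)).2‖ ^ 2
      ≤ 𝔼 b : Fin m → Fin n, (‖∇ F (innerSeq d n f F η x₀ (extendFin i₀ b) t).1
          - (innerSeq d n f F η x₀ (extendFin i₀ b) t).2‖ ^ 2
        + L ^ 2 * η ^ 2 * ‖(innerSeq d n f F η x₀ (extendFin i₀ b) t).2‖ ^ 2) := by
  have : Nonempty (Fin n) := ⟨i₀⟩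
  set W := fun b : Fin m → Fin n => innerSeq d n f F η x₀ (extendFin i₀ b) t
  -- the state after `t` steps does not see the index `b t` drawn at step `t`
  have hW : ∀ b c, W (Function.update b ⟨t, ht⟩ c) = W b := fun b c =>
    innerSeq_congr fun j hj => extendFin_update_of_ne _ _ _ _ hj.ne
  set g := fun (b : Fin m → Fin n) (c : Fin n) =>
    ‖∇ F ((W b).1 - η • (W b).2)
      - (∇ (f c) ((W b).1 - η • (W b).2) - ∇ (f c) (W b).1 + (W b).2)‖ ^ 2
  calc _ = 𝔼 b, g b (b ⟨t, ht⟩) := by simp only [g, W, innerSeq, extendFin_of_lt _ _ ht]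
    _ = 𝔼 b, 𝔼 c, g b c := Fintype.expect_apply_eval_eq_expect_expect _ g fun b c => by
        simp only [g, hW]
    _ ≤ _ := expect_le_expect fun b _ => by
        have hvar := hfF.expect_norm_gradient_sub_sarah_sq_le i₀.pos (W b).1
          ((W b).1 - η • (W b).2) (W b).2
        rwa [sub_sub_cancel_left, norm_neg, norm_smul, mul_pow, Real.norm_eq_abs, sq_abs,
          ← mul_assoc] at hvar

theorem expect_sum_norm_gradient_innerSeq_le (hfF : AverageSmooth f F L) (hL : 0 ≤ L)
    (hη : 0 < η) (hstep : L ^ 2 * η ^ 2 * m + L * η ≤ 1) (i₀ : Fin n) (x₀ : Vec d) :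
    𝔼 b : Fin m → Fin n, (∑ t ∈ range (m + 1),
        ‖∇ F (innerSeq d n f F η x₀ (extendFin i₀ b) t).1‖ ^ 2
        + 2 / η * F (innerSeq d n f F η x₀ (extendFin i₀ b) (m + 1)).1)
      ≤ 2 / η * F x₀ := by
  have : Nonempty (Fin n) := ⟨i₀⟩
  set W := fun (b : Fin m → Fin n) t => innerSeq d n f F η x₀ (extendFin i₀ b) t
  set A := fun t => 𝔼 b, ‖∇ F (W b t).1‖ ^ 2
  set B := fun t => 𝔼 b, ‖(W b t).2‖ ^ 2
  set V := fun t => 𝔼 b, ‖∇ F (W b t).1 - (W b t).2‖ ^ 2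
  have hB : ∀ t, 0 ≤ B t := fun t => expect_nonneg fun b _ => by positivity
  have hpath : 𝔼 b, F (W b (m + 1)).1
      + (η / 2 * ∑ t ∈ range (m + 1), A t + η / 2 * (1 - L * η) * ∑ t ∈ range (m + 1), B t
        - η / 2 * ∑ t ∈ range (m + 1), V t) ≤ F x₀ := by
    refine le_trans (le_of_eq ?_) (expect_le (s := (univ : Finset (Fin m → Fin n)))
      univ_nonempty fun b _ => innerSeq_descent (f := f) hfF.differentiable
        (hfF.norm_gradient_sub_le hL) hη.le x₀ (extendFin i₀ b) (m + 1))
    simp only [A, B, V, W, mul_sum, mul_expect, ← sum_add_distrib, ← sum_sub_distrib,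
      ← expect_sum_comm, ← expect_add_distrib, ← expect_sub_distrib]
  have hV : ∑ t ∈ range (m + 1), V t ≤ m * (L ^ 2 * η ^ 2) * ∑ t ∈ range (m + 1), B t :=
    sum_range_le_mul_sum_of_le_add (by positivity) hB (by simp [V, W, innerSeq])
      fun t ht => by
        simpa only [expect_add_distrib, ← mul_expect] using
          expect_norm_gradient_sub_innerSeq_succ_le hfF i₀ x₀ ht
  have hdrop : η / 2 * ∑ t ∈ range (m + 1), V t
      ≤ η / 2 * (1 - L * η) * ∑ t ∈ range (m + 1), B t :=
    calc η / 2 * ∑ t ∈ range (m + 1), V t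
        ≤ η / 2 * (m * (L ^ 2 * η ^ 2)) * ∑ t ∈ range (m + 1), B t := by
          rw [mul_assoc]; gcongr
      _ ≤ η / 2 * (1 - L * η) * ∑ t ∈ range (m + 1), B t := by gcongr; linarith
  have hA : ∑ t ∈ range (m + 1), A t + 2 / η * 𝔼 b, F (W b (m + 1)).1 ≤ 2 / η * F x₀ :=
    calc ∑ t ∈ range (m + 1), A t + 2 / η * 𝔼 b, F (W b (m + 1)).1
        = 2 / η * (𝔼 b, F (W b (m + 1)).1 + η / 2 * ∑ t ∈ range (m + 1), A t) := by
          field_simp; ring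
      _ ≤ 2 / η * F x₀ := by gcongr; linarith
  simpa only [expect_add_distrib, expect_sum_comm, mul_expect] using hA

theorem expect_sum_norm_gradient_epoch_le (hfF : AverageSmooth f F L) (hL : 0 ≤ L)
    (hη : 0 < η) (hstep : L ^ 2 * η ^ 2 * m + L * η ≤ 1) (i₀ : Fin n) (w₀ : Vec d) {s : ℕ}
    (hs : s < S) :
    𝔼 ω : Fin S → Fin m → Fin n, ∑ t ∈ range (m + 1), ‖∇ F (innerSeq d n f F η
        (outerSeq d n m f F η w₀ (sarahIndices i₀ ω) s) (sarahIndices i₀ ω s) t).1‖ ^ 2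
      ≤ 2 / η * (𝔼 ω : Fin S → Fin m → Fin n,
          F (outerSeq d n m f F η w₀ (sarahIndices i₀ ω) s)
        - 𝔼 ω : Fin S → Fin m → Fin n,
          F (outerSeq d n m f F η w₀ (sarahIndices i₀ ω) (s + 1))) := by
  have : Nonempty (Fin n) := ⟨i₀⟩
  set x := fun ω : Fin S → Fin m → Fin n => outerSeq d n m f F η w₀ (sarahIndices i₀ ω) s
  -- the start of epoch `s` does not see the indices `ω s` drawn during it
  have hx : ∀ ω b, x (Function.update ω ⟨s, hs⟩ b) = x ω := fun ω b =>
    outerSeq_congr fun r hr => sarahIndices_update_of_ne _ _ _ _ hr.ne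
  set g := fun (ω : Fin S → Fin m → Fin n) (b : Fin m → Fin n) =>
    ∑ t ∈ range (m + 1), ‖∇ F (innerSeq d n f F η (x ω) (extendFin i₀ b) t).1‖ ^ 2
      + 2 / η * F (innerSeq d n f F η (x ω) (extendFin i₀ b) (m + 1)).1
  have hg : 𝔼 ω, g ω (ω ⟨s, hs⟩) ≤ 2 / η * 𝔼 ω, F (x ω) :=
    calc 𝔼 ω, g ω (ω ⟨s, hs⟩) = 𝔼 ω, 𝔼 b, g ω b :=
          Fintype.expect_apply_eval_eq_expect_expect _ g fun ω b => by simp only [g, hx]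
      _ ≤ 𝔼 ω, 2 / η * F (x ω) := expect_le_expect fun ω _ =>
          expect_sum_norm_gradient_innerSeq_le hfF hL hη hstep i₀ (x ω)
      _ = 2 / η * 𝔼 ω, F (x ω) := (mul_expect _ _ _).symm
  have hsarah : ∀ ω : Fin S → Fin m → Fin n, sarahIndices i₀ ω s = extendFin i₀ (ω ⟨s, hs⟩) :=
    fun ω => extendFin_of_lt _ _ hs
  simp only [g, expect_add_distrib, ← mul_expect] at hg
  simp only [outerSeq, hsarah, mul_sub]
  linarith

theorem sum_sum_sarahE_le (hfF : AverageSmooth f F L) (hL : 0 ≤ L) (hη : 0 < η)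
    (hstep : L ^ 2 * η ^ 2 * m + L * η ≤ 1) (hn : 0 < n) (w₀ : Vec d) {Fstar : ℝ}
    (hFstar : ∀ w, Fstar ≤ F w) :
    ∑ s ∈ range S, ∑ t ∈ range (m + 1), sarahE n m S hn (fun ω =>
        ‖∇ F (innerSeq d n f F η (outerSeq d n m f F η w₀ ω s) (ω s) t).1‖ ^ 2)
      ≤ 2 / η * (F w₀ - Fstar) := by
  have : Nonempty (Fin n) := ⟨⟨0, hn⟩⟩
  set Φ := fun s => 𝔼 ω : Fin S → Fin m → Fin n,
    F (outerSeq d n m f F η w₀ (sarahIndices ⟨0, hn⟩ ω) s)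
  have hΦS : Fstar ≤ Φ S := le_expect univ_nonempty fun ω _ => hFstar _
  simp only [sarahE_eq_expect]
  calc _ ≤ ∑ s ∈ range S, (2 / η * Φ s - 2 / η * Φ (s + 1)) := sum_le_sum fun s hs => by
        rw [← expect_sum_comm, ← mul_sub]
        exact expect_sum_norm_gradient_epoch_le hfF hL hη hstep _ w₀ (mem_range.mp hs)
    _ = 2 / η * (F w₀ - Φ S) := by
        rw [sum_range_sub' (fun s => 2 / η * Φ s), mul_sub]
        simp [Φ, outerSeq]
    _ ≤ 2 / η * (F w₀ - Fstar) := by gcongr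

end Sarah

theorem stepSize_condition_of_eq {L η : ℝ} (n : ℕ) (hL : 0 < L)
    (hη : η = 2 / (3 * L * Real.sqrt ((n : ℝ) + 1))) :
    0 < η ∧ L ^ 2 * η ^ 2 * n + L * η ≤ 1 := by
  have hq : Real.sqrt ((n : ℝ) + 1) ^ 2 = n + 1 := Real.sq_sqrt (by positivity)
  -- with `c = Lη = 2/(3√(n+1))`, the condition reads `4/9 - c² + c ≤ 1`
  have hc : L * η * Real.sqrt ((n : ℝ) + 1) = 2 / 3 := by rw [hη]; field_simp
  refine ⟨by rw [hη]; positivity, ?_⟩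
  have hcn : (L * η) ^ 2 * (n + 1) = 4 / 9 := by rw [← hq, ← mul_pow, hc]; norm_num
  nlinarith [sq_nonneg (L * η - 1 / 2)]

theorem one_div_mul_le_of_div_le {X a N S ε : ℝ} (hN : 0 < N) (hε : 0 < ε) (hS : 0 ≤ S)
    (hX : X ≤ a) (haS : a / (N * ε) ≤ S) : 1 / (N * S) * X ≤ ε := by
  rcases hS.eq_or_lt with rfl | hS
  · simp [hε.le]
  rw [div_le_iff₀ (by positivity)] at haS
  rw [one_div_mul_eq_div, div_le_iff₀ (by positivity)]
  nlinarith

theorem natCeil_div_mul_le {c ε : ℝ} (n : ℕ) (hc : 0 ≤ c) (hε : 0 < ε) :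
    ((⌈c / (Real.sqrt ((n : ℝ) + 1) * ε)⌉₊ * (n + 2 * n) : ℕ) : ℝ)
      ≤ 3 * Real.sqrt n * c / ε + 3 * n := by
  have hceil := Nat.ceil_lt_add_one (by positivity : 0 ≤ c / (Real.sqrt ((n : ℝ) + 1) * ε))
  have hn : (n : ℝ) ≤ Real.sqrt n * Real.sqrt ((n : ℝ) + 1) := by
    rw [← Real.sqrt_mul (by positivity)]
    exact Real.le_sqrt_of_sq_le (by nlinarith)
  have hfrac : n * (c / (Real.sqrt ((n : ℝ) + 1) * ε)) ≤ Real.sqrt n * c / ε := by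
    rw [mul_div_assoc', div_le_div_iff₀ (by positivity) hε]
    nlinarith [mul_le_mul_of_nonneg_left hn (by positivity : 0 ≤ c * ε)]
  have h3 := mul_le_mul_of_nonneg_left hceil.le (by positivity : (0 : ℝ) ≤ 3 * n)
  push_cast
  linear_combination h3 + 3 * hfrac

/-- **Optimal complexity of SARAH for smooth nonconvex optimization** (Statement 3,
Corollary 2 of the paper). With inner loop size `m = n`, learning rate
`η = 2/(3L√(n+1))` and `S = ⌈3L(F(w̃_0) - F*)/(√(n+1)ε)⌉` outer iterations, the average
of the expected squared gradient norms is at most `ε`, and the total number of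
stochastic gradient evaluations satisfies `S(n + 2n) ≤ 9√n·L(F(w̃_0) - F*)/ε + 3n`. -/
theorem sarah_nonconvex_optimal_complexity
    (d n S : ℕ) (hn : 0 < n)
    (f : Fin n → Vec d → ℝ) (F : Vec d → ℝ)
    (hF : ∀ w, F w = (∑ i, f i w) / n)
    (hdiff : ∀ i, Differentiable ℝ (f i))
    (L η : ℝ) (hL : 0 < L)
    (havg : ∀ w w' : Vec d,
      (∑ i, ‖gradient (f i) w - gradient (f i) w'‖ ^ 2) / n ≤ L ^ 2 * ‖w - w'‖ ^ 2)
    (hη : η = 2 / (3 * L * Real.sqrt ((n : ℝ) + 1)))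
    (w0 : Vec d) (Fstar : ℝ) (hFstar : ∀ w, Fstar ≤ F w)
    (ε : ℝ) (hε : 0 < ε)
    (hS : S = ⌈3 * L * (F w0 - Fstar) / (Real.sqrt ((n : ℝ) + 1) * ε)⌉₊) :
    1 / (((n : ℝ) + 1) * (S : ℝ)) *
        ∑ s ∈ Finset.range S, ∑ t ∈ Finset.range (n + 1),
          sarahE n n S hn (fun ω =>
            ‖gradient F (innerSeq d n f F η (outerSeq d n n f F η w0 ω s) (ω s) t).1‖ ^ 2)
      ≤ ε
    ∧ ((S * (n + 2 * n) : ℕ) : ℝ)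
        ≤ 9 * Real.sqrt (n : ℝ) * L * (F w0 - Fstar) / ε + 3 * (n : ℝ) := by
  obtain ⟨hη0, hstep⟩ := stepSize_condition_of_eq n hL hη
  have hq : Real.sqrt ((n : ℝ) + 1) ^ 2 = n + 1 := Real.sq_sqrt (by positivity)
  have hsum := sum_sum_sarahE_le (S := S) ⟨hF, hdiff, havg⟩ hL.le hη0 hstep hn w0 hFstar
  refine ⟨one_div_mul_le_of_div_le (by positivity) hε S.cast_nonneg hsum ?_, ?_⟩
  · refine le_of_eq_of_le ?_ (hS ▸ Nat.le_ceil _)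
    rw [hη]
    field_simp
    rw [hq]
  · rw [hS]
    convert natCeil_div_mul_le (c := 3 * L * (F w0 - Fstar)) n
      (mul_nonneg (by positivity) (sub_nonneg.mpr (hFstar w0))) hε using 1
    ring

end
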